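/- arXiv:1109.4017 — 3 statements merged into one kernel-verified Lean document; each statement's English description precedes it below -/
import Mathlib

section
/- Let n ≥ 1, let p be a real with 0 < p ≤ 1, and let a_1, …, a_n ∈ {0, 1, 2} be such that 1/2 = p/2^{n+1} + ∑_{i=1}^{n} a_i/2^{i+1}. Then p = 1 and a_i = 1 for all i = 1, …, n. -/
/-!
Subtracting the expansion `1/2 = 1/2^(n+1) + ∑ 1/2^(i+1)` turns the hypothesis into
`(1 - p)/2^(n+1) = ∑ (a i - 1)/2^(i+1)` with `0 ≤ 1 - p < 1` and digits `a i - 1 ∈ {-1, 0, 1}`.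
Such a signed-digit expansion of a number of modulus below one is trivial: peeling off the last
digit `b` replaces `q` by `(q - b)/r`, which again has modulus below one, and at the end `q = b`
forces both to vanish.
-/

open Finset

theorem signed_digits_eq_zero {r : ℝ} (hr : 2 ≤ r) (n : ℕ) (b : ℕ → ℝ)
    (hb : ∀ i ∈ Icc 1 n, b i = -1 ∨ b i = 0 ∨ b i = 1) {q : ℝ} (hq : |q| < 1)
    (h : q / r ^ (n + 1) = ∑ i ∈ Icc 1 n, b i / r ^ (i + 1)) :
    q = 0 ∧ ∀ i ∈ Icc 1 n, b i = 0 := by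
  induction n generalizing q with
  | zero =>
    simp only [zero_add, pow_one, Icc_eq_empty_of_lt zero_lt_one, sum_empty,
      div_eq_zero_iff] at h
    exact ⟨h.resolve_right (by linarith), by simp⟩
  | succ n ih =>
    have hb_last : b (n + 1) = -1 ∨ b (n + 1) = 0 ∨ b (n + 1) = 1 := hb _ (by simp)
    have hr_pos : 0 < r := by linarith
    have h' : (q - b (n + 1)) / r / r ^ (n + 1) = ∑ i ∈ Icc 1 n, b i / r ^ (i + 1) := by
      rw [sum_Icc_succ_top (by omega), ← sub_eq_iff_eq_add] at h
      rw [← h]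
      field_simp
      ring
    have hq' : |(q - b (n + 1)) / r| < 1 := by
      rw [abs_div, abs_of_pos hr_pos, div_lt_one hr_pos, abs_lt]
      rw [abs_lt] at hq
      rcases hb_last with hl | hl | hl <;> rw [hl] <;> constructor <;> linarith
    obtain ⟨hq_eq, hb_init⟩ :=
      ih (fun i hi => hb i (Icc_subset_Icc_right n.le_succ hi)) hq' h'
    have hq_last : q = b (n + 1) := by
      rw [div_eq_zero_iff, sub_eq_zero] at hq_eq
      exact hq_eq.resolve_right hr_pos.ne'
    have hb0 : b (n + 1) = 0 := by
      rw [hq_last] at hq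
      rcases hb_last with hl | hl | hl <;> simp [hl] at hq ⊢
    refine ⟨hq_last.trans hb0, fun i hi => ?_⟩
    rcases (mem_Icc.1 hi).2.lt_or_eq with hlt | rfl
    · exact hb_init i (mem_Icc.2 ⟨(mem_Icc.1 hi).1, Nat.lt_succ_iff.1 hlt⟩)
    · exact hb0

theorem sum_Icc_one_div_two_pow_succ (n : ℕ) :
    ∑ i ∈ Icc 1 n, (1 : ℝ) / 2 ^ (i + 1) = 1 / 2 - 1 / 2 ^ (n + 1) := by
  induction n with
  | zero => simp
  | succ n ih =>
    rw [sum_Icc_succ_top (by omega), ih]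
    field_simp
    ring

theorem stmt_2_general (n : ℕ) (p : ℝ) (hp : 0 < p) (hp1 : p ≤ 1)
    (a : ℕ → ℝ) (ha : ∀ i ∈ Finset.Icc 1 n, a i = 0 ∨ a i = 1 ∨ a i = 2)
    (heq : (1 : ℝ) / 2 = p / 2 ^ (n + 1) + ∑ i ∈ Finset.Icc 1 n, a i / 2 ^ (i + 1)) :
    p = 1 ∧ ∀ i ∈ Finset.Icc 1 n, a i = 1 := by
  have hshift : (1 - p) / 2 ^ (n + 1) = ∑ i ∈ Icc 1 n, (a i - 1) / 2 ^ (i + 1) := by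
    simp only [sub_div, sum_sub_distrib, sum_Icc_one_div_two_pow_succ]
    linarith
  have hdigits : ∀ i ∈ Icc 1 n, a i - 1 = -1 ∨ a i - 1 = 0 ∨ a i - 1 = 1 := by
    intro i hi
    rcases ha i hi with h | h | h <;> rw [h] <;> norm_num
  obtain ⟨hp_eq, ha_eq⟩ := signed_digits_eq_zero le_rfl n (fun i => a i - 1) hdigits
    (abs_lt.2 ⟨by linarith, by linarith⟩) hshift
  exact ⟨by linarith, fun i hi => by linarith [ha_eq i hi]⟩

theorem stmt_2 (n : ℕ) (hn : 1 ≤ n) (p : ℝ) (hp : 0 < p) (hp1 : p ≤ 1)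
    (a : ℕ → ℝ) (ha : ∀ i ∈ Finset.Icc 1 n, a i = 0 ∨ a i = 1 ∨ a i = 2)
    (heq : (1 : ℝ) / 2 = p / 2 ^ (n + 1) + ∑ i ∈ Finset.Icc 1 n, a i / 2 ^ (i + 1)) :
    p = 1 ∧ ∀ i ∈ Finset.Icc 1 n, a i = 1 :=
  stmt_2_general n p hp hp1 a ha heq
end

section
/- Let 0 < p < 1 and q = 1 − p. The maximum of f(x) = (p + q·x·p)/(1 − q²·x²) over all x ∈ [0,1] satisfying (1−p)·x² − 2·x + 1 ≥ 0 equals √p, attained at x = (1 − √p)/(1 − p). -/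
theorem stmt_9 (p q : ℝ) (hp0 : 0 < p) (hp1 : p < 1) (hq : q = 1 - p) :
    let f : ℝ → ℝ := fun x => (p + q * x * p) / (1 - q ^ 2 * x ^ 2)
    let x₀ : ℝ := (1 - Real.sqrt p) / (1 - p)
    x₀ ∈ Set.Icc (0 : ℝ) 1 ∧ (1 - p) * x₀ ^ 2 - 2 * x₀ + 1 ≥ 0 ∧
    f x₀ = Real.sqrt p ∧
    ∀ x ∈ Set.Icc (0 : ℝ) 1, (1 - p) * x ^ 2 - 2 * x + 1 ≥ 0 → f x ≤ Real.sqrt p := by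
  intro f x₀
  set s := Real.sqrt p with hs
  have hs0 : 0 < s := Real.sqrt_pos.mpr hp0
  have hs2 : s ^ 2 = p := Real.sq_sqrt hp0.le
  have hs1 : s < 1 := by
    nlinarith [hs2, hs0]
  have h1s : 0 < 1 + s := by linarith
  have h1s' : (1 : ℝ) + s ≠ 0 := ne_of_gt h1s
  have hx0 : x₀ = 1 / (1 + s) := by
    show (1 - s) / (1 - p) = 1 / (1 + s)
    rw [div_eq_div_iff (ne_of_gt (by linarith : (0:ℝ) < 1 - p)) h1s']
    linear_combination -hs2
  have hmem : x₀ ∈ Set.Icc (0 : ℝ) 1 := by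
    rw [hx0]
    constructor
    · positivity
    · rw [div_le_one h1s]; linarith
  have hconstr : (1 - p) * x₀ ^ 2 - 2 * x₀ + 1 = 0 := by
    rw [hx0, ← hs2]; field_simp; ring
  refine ⟨hmem, by rw [hconstr], ?_, ?_⟩
  · show (p + q * x₀ * p) / (1 - q ^ 2 * x₀ ^ 2) = s
    have hden : 1 - q ^ 2 * x₀ ^ 2 = s * (2 - s) := by
      rw [hq, hx0, ← hs2]; field_simp; ring
    have hdnz : (1 : ℝ) - q ^ 2 * x₀ ^ 2 ≠ 0 := by
      rw [hden]
      exact ne_of_gt (mul_pos hs0 (by linarith))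
    rw [div_eq_iff hdnz, hq, hx0, ← hs2]
    field_simp
    ring
  · intro x hx hc
    have hx0' := hx.1
    have hx1 := hx.2
    have hq0 : 0 < q := by rw [hq]; linarith
    have hq1 : q < 1 := by rw [hq]; linarith
    have hqx : 0 ≤ q * x := by positivity
    have hqx1 : q * x < 1 := by nlinarith
    have hden : 0 < 1 - q ^ 2 * x ^ 2 := by nlinarith
    rw [div_le_iff₀ hden]
    -- constraint factors: ((1+s)x - 1)((1-s)x - 1) ≥ 0, second factor negative
    have hfac : ((1 + s) * x - 1) * ((1 - s) * x - 1) ≥ 0 := by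
      have : ((1 + s) * x - 1) * ((1 - s) * x - 1) = (1 - p) * x ^ 2 - 2 * x + 1 := by
        rw [← hs2]; ring
      linarith [this ▸ hc]
    have hneg : (1 - s) * x - 1 < 0 := by nlinarith
    have hxle : (1 + s) * x ≤ 1 := by nlinarith
    have key : s * (1 - q ^ 2 * x ^ 2) - (p + q * x * p) =
        s * (1 + q * x) * (1 - s) * (1 - (1 + s) * x) := by
      rw [hq, ← hs2]; ring
    have hnn : 0 ≤ s * (1 + q * x) * (1 - s) * (1 - (1 + s) * x) :=
      mul_nonneg (mul_nonneg (mul_nonneg hs0.le (by linarith)) (by linarith)) (by linarith)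
    linarith
end

section
/- Let (a_n) and (p_n) be real sequences such that a_n = p_n + (1/4)·a_{n+2} and 0 ≤ a_n ≤ 1 for all n. Then a_n = 1/3 for all n if and only if p_n = 1/4 for all n. -/
theorem stmt_15 (a p : ℕ → ℝ)
    (hrec : ∀ n, a n = p n + (1 / 4) * a (n + 2))
    (hbound : ∀ n, 0 ≤ a n ∧ a n ≤ 1) :
    (∀ n, a n = 1 / 3) ↔ (∀ n, p n = 1 / 4) := by
  constructor
  · intro ha n
    have h := hrec n
    rw [ha n, ha (n + 2)] at h
    linarith
  · intro hp
    have key : ∀ k n, |a n - 1 / 3| ≤ (1 / 4 : ℝ) ^ k := by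
      intro k
      induction k with
      | zero =>
        intro n
        have := hbound n
        rw [abs_le]
        constructor <;> simp <;> linarith [this.1, this.2]
      | succ k ih =>
        intro n
        have h := hrec n
        rw [hp n] at h
        have : a n - 1 / 3 = (1 / 4) * (a (n + 2) - 1 / 3) := by linarith
        rw [this, abs_mul, pow_succ]
        rw [abs_of_nonneg (by norm_num : (0:ℝ) ≤ 1/4)]
        have := ih (n + 2)
        nlinarith [abs_nonneg (a (n+2) - 1/3)]
    intro n
    have h0 : |a n - 1 / 3| ≤ 0 := by
      by_contra h
      push_neg at h
      obtain ⟨k, hk⟩ := exists_pow_lt_of_lt_one h (by norm_num : (1/4 : ℝ) < 1)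
      exact absurd (key k n) (not_le.mpr hk)
    have := abs_nonneg (a n - 1/3)
    have : |a n - 1/3| = 0 := le_antisymm h0 this
    have := abs_eq_zero.mp this
    linarith
end
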